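/- arXiv:2402.18703 — 3 statements merged into one kernel-verified Lean document; each statement's English description precedes it below -/
import Mathlib

section
/- Let A ∈ M_d(ℝ) be column stochastic and let Φ_A be the associated classical channel on M_d(ℂ). If Φ_A is c-scrambling, then the one-shot zero-error entanglement-assisted classical capacity of Φ_A vanishes, i.e. for all d₀, d₁ ≥ 1, every unit vector |ψ⟩ ∈ ℂ^{d₀} ⊗ ℂ^{d₁}, and every pair of quantum channels E₁, E₂ : M_{d₀}(ℂ) → M_d(ℂ), one has Tr[((Φ_A ∘ E₁) ⊗ id)(|ψ⟩⟨ψ|) · ((Φ_A ∘ E₂) ⊗ id)(|ψ⟩⟨ψ|)] > 0. Consequently c(Φ_A) = c_E(Φ_A). -/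
open Matrix Filter
open scoped ComplexOrder

/-- The algebra of `n × n` complex matrices. -/
abbrev Mat (n : ℕ) := Matrix (Fin n) (Fin n) ℂ

/-- A linear map between matrix algebras is a quantum channel if it admits a Kraus
representation `Φ(X) = ∑ i, K i * X * (K i)ᴴ` with `∑ i, (K i)ᴴ * K i = 1`. -/
def IsChannel {m n : ℕ} (Φ : Matrix (Fin m) (Fin m) ℂ →ₗ[ℂ] Mat n) : Prop :=
  ∃ (p : ℕ) (K : Fin p → Matrix (Fin n) (Fin m) ℂ),
    (∀ X, Φ X = ∑ i, K i * X * (K i)ᴴ) ∧ ∑ i, (K i)ᴴ * K i = 1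

/-- A quantum state: positive semidefinite with unit trace. -/
def IsState {n : ℕ} (ρ : Mat n) : Prop := ρ.PosSemidef ∧ ρ.trace = 1

/-- The rank-one matrix `|ψ⟩⟨ψ|`. -/
def pureState {ι : Type*} (ψ : ι → ℂ) : Matrix ι ι ℂ :=
  Matrix.of fun i j => ψ i * star (ψ j)

/-- `ψ` is a unit vector. -/
def IsUnitVec {ι : Type*} [Fintype ι] (ψ : ι → ℂ) : Prop :=
  ∑ i, star (ψ i) * ψ i = 1

/-- c-scrambling: outputs of orthogonal pure states are never orthogonal. -/
def CScrambling {n : ℕ} (Φ : Mat n →ₗ[ℂ] Mat n) : Prop :=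
  ∀ ψ φ : Fin n → ℂ, IsUnitVec ψ → IsUnitVec φ → ∑ i, star (ψ i) * φ i = 0 →
    0 < (Φ (pureState ψ) * Φ (pureState φ)).trace

/-- A subspace `C ⊆ ℂ^n` is correctable for `Φ`. -/
def Correctable {n : ℕ} (Φ : Mat n →ₗ[ℂ] Mat n) (C : Submodule ℂ (Fin n → ℂ)) : Prop :=
  ∃ R : Mat n →ₗ[ℂ] Mat n, IsChannel R ∧
    ∀ ρ : Mat n, IsState ρ → LinearMap.range ρ.mulVecLin ≤ C → R (Φ ρ) = ρ

/-- q-scrambling: no correctable subspace of dimension ≥ 2. -/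
def QScrambling {n : ℕ} (Φ : Mat n →ₗ[ℂ] Mat n) : Prop :=
  ∀ C : Submodule ℂ (Fin n → ℂ), Correctable Φ C → Module.finrank ℂ C ≤ 1

/-- Apply `Φ` to the first tensor factor: `(Φ ⊗ id) M`. -/
def tensorId {d₀ n d₁ : ℕ} (Φ : Matrix (Fin d₀) (Fin d₀) ℂ →ₗ[ℂ] Mat n)
    (M : Matrix (Fin d₀ × Fin d₁) (Fin d₀ × Fin d₁) ℂ) :
    Matrix (Fin n × Fin d₁) (Fin n × Fin d₁) ℂ :=
  Matrix.of fun p q => Φ (Matrix.of fun k l => M (k, p.2) (l, q.2)) p.1 q.1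

/-- Vanishing one-shot zero-error entanglement-assisted classical capacity. -/
def VanishingC0E {n : ℕ} (Φ : Mat n →ₗ[ℂ] Mat n) : Prop :=
  ∀ (d₀ d₁ : ℕ), 0 < d₀ → 0 < d₁ → ∀ ψ : Fin d₀ × Fin d₁ → ℂ, IsUnitVec ψ →
    ∀ E₁ E₂ : Matrix (Fin d₀) (Fin d₀) ℂ →ₗ[ℂ] Mat n, IsChannel E₁ → IsChannel E₂ →
      0 < (tensorId (Φ ∘ₗ E₁) (pureState ψ) * tensorId (Φ ∘ₗ E₂) (pureState ψ)).trace

/-- Mixing channel: `Φ^n X → Tr(X) ρ⋆` entrywise. -/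
def Mixing {n : ℕ} (Φ : Module.End ℂ (Mat n)) : Prop :=
  ∃ ρ : Mat n, IsState ρ ∧
    ∀ X : Mat n, Tendsto (fun k => (Φ ^ k) X) atTop (nhds (X.trace • ρ))

/-- Strictly positive channel: every state is sent to a positive definite matrix. -/
def StrictlyPositive {n : ℕ} (Φ : Mat n →ₗ[ℂ] Mat n) : Prop :=
  ∀ ρ : Mat n, IsState ρ → (Φ ρ).PosDef

/-- Primitive channel: mixing with positive definite invariant state. -/
def Primitive {n : ℕ} (Φ : Module.End ℂ (Mat n)) : Prop :=
  ∃ ρ : Mat n, IsState ρ ∧ ρ.PosDef ∧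
    ∀ X : Mat n, Tendsto (fun k => (Φ ^ k) X) atTop (nhds (X.trace • ρ))

/-- Classical scrambling time `c(Φ)`. -/
noncomputable def cTime {n : ℕ} (Φ : Module.End ℂ (Mat n)) : ℕ∞ :=
  sInf {N : ℕ∞ | ∃ k : ℕ, N = k ∧ 1 ≤ k ∧ CScrambling (Φ ^ k)}

/-- Quantum scrambling time `q(Φ)`. -/
noncomputable def qTime {n : ℕ} (Φ : Module.End ℂ (Mat n)) : ℕ∞ :=
  sInf {N : ℕ∞ | ∃ k : ℕ, N = k ∧ 1 ≤ k ∧ QScrambling (Φ ^ k)}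

/-- Entanglement-assisted classical scrambling time `c_E(Φ)`. -/
noncomputable def cETime {n : ℕ} (Φ : Module.End ℂ (Mat n)) : ℕ∞ :=
  sInf {N : ℕ∞ | ∃ k : ℕ, N = k ∧ 1 ≤ k ∧ VanishingC0E (Φ ^ k)}

/-- Wielandt index `w(Φ)`. -/
noncomputable def wTime {n : ℕ} (Φ : Module.End ℂ (Mat n)) : ℕ∞ :=
  sInf {N : ℕ∞ | ∃ k : ℕ, N = k ∧ 1 ≤ k ∧ StrictlyPositive (Φ ^ k)}

/-- `M(Φ)`: the maximal size of a zero-error classical code for `Φ`. -/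
noncomputable def Mclassical {n : ℕ} (Φ : Mat n →ₗ[ℂ] Mat n) : ℕ :=
  sSup {M : ℕ | ∃ ψ : Fin M → Fin n → ℂ, (∀ m, IsUnitVec (ψ m)) ∧
    ∀ m m', m ≠ m' → (Φ (pureState (ψ m)) * Φ (pureState (ψ m'))).trace = 0}

/-- `D(Φ)`: the maximal dimension of a correctable subspace for `Φ`. -/
noncomputable def Dquantum {n : ℕ} (Φ : Mat n →ₗ[ℂ] Mat n) : ℕ :=
  sSup {M : ℕ | ∃ C : Submodule ℂ (Fin n → ℂ), Correctable Φ C ∧ Module.finrank ℂ C = M}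

/-- `M_E(Φ)`: the maximal size of an entanglement-assisted zero-error classical code. -/
noncomputable def MEclassical {n : ℕ} (Φ : Mat n →ₗ[ℂ] Mat n) : ℕ :=
  sSup {M : ℕ | ∃ (d₀ d₁ : ℕ) (ψ : Fin d₀ × Fin d₁ → ℂ), 0 < d₀ ∧ 0 < d₁ ∧ IsUnitVec ψ ∧
    ∃ E : Fin M → (Matrix (Fin d₀) (Fin d₀) ℂ →ₗ[ℂ] Mat n),
      (∀ m, IsChannel (E m)) ∧
      ∀ m m', m ≠ m' →
        (tensorId (Φ ∘ₗ E m) (pureState ψ) * tensorId (Φ ∘ₗ E m') (pureState ψ)).trace = 0}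

/-- The ordered product `K_{i 0} ⋯ K_{i (n-1)}` of Kraus operators. -/
noncomputable def krausProd {d p : ℕ} (K : Fin p → Mat d) {n : ℕ} (i : Fin n → Fin p) : Mat d :=
  (List.ofFn fun t => K (i t)).prod

/-- The operator system of `Φ^n`, for `Φ` with Kraus operators `K`. -/
noncomputable def opSys {d p : ℕ} (K : Fin p → Mat d) (n : ℕ) : Submodule ℂ (Mat d) :=
  Submodule.span ℂ {X | ∃ i j : Fin n → Fin p, X = (krausProd K i)ᴴ * krausProd K j}

/-- `𝒦_n(Φ)`: the span of `n`-fold products of Kraus operators. -/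
noncomputable def kSpan {d p : ℕ} (K : Fin p → Mat d) (n : ℕ) : Submodule ℂ (Mat d) :=
  Submodule.span ℂ {X | ∃ i : Fin n → Fin p, X = krausProd K i}

/-- `A` is column stochastic. -/
def ColumnStochastic {d : ℕ} (A : Matrix (Fin d) (Fin d) ℝ) : Prop :=
  (∀ i j, 0 ≤ A i j) ∧ ∀ j, ∑ i, A i j = 1

/-- The CDUC map `Φ_{A,B}(X) = ∑ᵢⱼ A i j * X j j |i⟩⟨i| + ∑_{i≠j} B i j * X i j |i⟩⟨j|`. -/
noncomputable def cducMap {d : ℕ} (A : Matrix (Fin d) (Fin d) ℝ) (B : Mat d) :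
    Mat d →ₗ[ℂ] Mat d where
  toFun X := Matrix.of fun i j =>
    if i = j then ∑ k, (A i k : ℂ) * X k k else B i j * X i j
  map_add' X Y := by
    ext i j
    by_cases h : i = j <;>
      simp [h, Matrix.add_apply, mul_add, Finset.sum_add_distrib]
  map_smul' c X := by
    ext i j
    by_cases h : i = j <;>
      simp [h, Matrix.smul_apply, smul_eq_mul, Finset.mul_sum, mul_left_comm]

/-- The DUC map `Φ_{A,C}(X) = ∑ᵢⱼ A i j * X j j |i⟩⟨i| + ∑_{i≠j} C i j * X j i |i⟩⟨j|`. -/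
noncomputable def ducMap {d : ℕ} (A : Matrix (Fin d) (Fin d) ℝ) (C : Mat d) :
    Mat d →ₗ[ℂ] Mat d where
  toFun X := Matrix.of fun i j =>
    if i = j then ∑ k, (A i k : ℂ) * X k k else C i j * X j i
  map_add' X Y := by
    ext i j
    by_cases h : i = j <;>
      simp [h, Matrix.add_apply, mul_add, Finset.sum_add_distrib]
  map_smul' c X := by
    ext i j
    by_cases h : i = j <;>
      simp [h, Matrix.smul_apply, smul_eq_mul, Finset.mul_sum, mul_left_comm]

/-- The classical channel `Φ_A(X) = ∑ᵢⱼ A i j * X j j |i⟩⟨i|` of a stochastic matrix `A`. -/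
noncomputable def classicalChannel {d : ℕ} (A : Matrix (Fin d) (Fin d) ℝ) :
    Mat d →ₗ[ℂ] Mat d :=
  cducMap A 0

/-- A stochastic matrix is scrambling if any two columns overlap in some row. -/
def MatScrambling {d : ℕ} (A : Matrix (Fin d) (Fin d) ℝ) : Prop :=
  ∀ i j, ∃ k, 0 < A k i * A k j

/-- A matrix with strictly positive entries. -/
def MatStrictlyPositive {d : ℕ} (A : Matrix (Fin d) (Fin d) ℝ) : Prop :=
  ∀ i j, 0 < A i j

/-- A stochastic matrix is mixing if `1` is an eigenvalue of algebraic multiplicity one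
and there is no other eigenvalue of modulus one. -/
def MatMixing {d : ℕ} (A : Matrix (Fin d) (Fin d) ℝ) : Prop :=
  Polynomial.rootMultiplicity 1 (Matrix.charpoly (A.map Complex.ofReal)) = 1 ∧
  ∀ μ : ℂ, ‖μ‖ = 1 → (Matrix.charpoly (A.map Complex.ofReal)).IsRoot μ → μ = 1

/-- A stochastic matrix is primitive if it is mixing and its invariant probability
vector is entrywise strictly positive. -/
def MatPrimitive {d : ℕ} (A : Matrix (Fin d) (Fin d) ℝ) : Prop :=
  MatMixing A ∧
    ∀ v : Fin d → ℝ, (∀ i, 0 ≤ v i) → ∑ i, v i = 1 → A *ᵥ v = v → ∀ i, 0 < v i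

/-- The scrambling time of a stochastic matrix. -/
noncomputable def cMat {d : ℕ} (A : Matrix (Fin d) (Fin d) ℝ) : ℕ∞ :=
  sInf {N : ℕ∞ | ∃ k : ℕ, N = k ∧ 1 ≤ k ∧ MatScrambling (A ^ k)}

/-- The Wielandt index of a stochastic matrix. -/
noncomputable def wMat {d : ℕ} (A : Matrix (Fin d) (Fin d) ℝ) : ℕ∞ :=
  sInf {N : ℕ∞ | ∃ k : ℕ, N = k ∧ 1 ≤ k ∧ MatStrictlyPositive (A ^ k)}

/-- The matrix `A_d` from the paper (0-indexed). -/
noncomputable def Amat (d : ℕ) : Matrix (Fin d) (Fin d) ℝ :=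
  Matrix.of fun i j =>
    if (i : ℕ) = d - 1 ∧ (j : ℕ) = 0 then 1
    else if (j : ℕ) = 1 ∧ ((i : ℕ) = 0 ∨ (i : ℕ) = d - 1) then 1 / 2
    else if 2 ≤ (j : ℕ) ∧ (i : ℕ) + 1 = (j : ℕ) then 1
    else 0

/-!
Write `ρⱼ = (Eⱼ ⊗ id)(|ψ⟩⟨ψ|)` and `ρⱼ⁽ᵏ⁾` for its `k`-th diagonal block in the first factor.
Since `Φ_A` only reads these blocks,
`Tr[(Φ_A ⊗ id)ρ₁ · (Φ_A ⊗ id)ρ₂] = ∑ₖₗ (AᵀA)ₖₗ Tr[ρ₁⁽ᵏ⁾ ρ₂⁽ˡ⁾]`.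
Each `Tr[ρ₁⁽ᵏ⁾ ρ₂⁽ˡ⁾]` is nonnegative because the blocks are positive semidefinite, and their sum
is `Tr σ² > 0`, where `σ = Tr₁ |ψ⟩⟨ψ|`: trace preserving channels on the first factor do not change
the reduced state on the second. Tested on pairs of basis vectors, c-scrambling of `Φ_A` makes the
off-diagonal entries of `AᵀA` positive, and the diagonal ones are positive because `A` has no zero
column; so the whole sum is positive.

Conversely every channel with vanishing capacity is c-scrambling (take `d₀ = d₁ = 1` and let `Eⱼ`
prepare the two pure states), and `Φ_A ^ k = Φ_{A ^ k}` for `k ≥ 1`, so the two scrambling times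
agree.
-/

theorem Finset.sum_mul_pos_of_pos_of_nonneg {ι R : Type*} [Fintype ι] [Semiring R]
    [PartialOrder R] [IsStrictOrderedRing R] {c t : ι → R} (hc : ∀ i, 0 < c i)
    (ht : ∀ i, 0 ≤ t i) (hsum : 0 < ∑ i, t i) : 0 < ∑ i, c i * t i := by
  obtain ⟨i, -, hi⟩ := Finset.exists_ne_zero_of_sum_ne_zero hsum.ne'
  exact Finset.sum_pos' (fun j _ => mul_nonneg (hc j).le (ht j))
    ⟨i, Finset.mem_univ _, mul_pos (hc i) ((ht i).lt_of_ne' hi)⟩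

namespace Matrix

variable {n : Type*} [Fintype n] {𝕜 : Type*} [RCLike 𝕜]

/-- `Tr (P Q)` is the sum of all entries of the Schur product `P ∘ Qᵀ`. -/
theorem PosSemidef.trace_mul_nonneg {P Q : Matrix n n 𝕜} (hP : P.PosSemidef)
    (hQ : Q.PosSemidef) : 0 ≤ (P * Q).trace := by
  have h := (hP.hadamard hQ.transpose).dotProduct_mulVec_nonneg 1
  convert h using 1
  simp only [trace, diag_apply, mul_apply, dotProduct, mulVec, hadamard_apply, transpose_apply,
    Pi.star_apply, Pi.one_apply, star_one, one_mul, mul_one]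

theorem PosSemidef.trace_mul_self_pos {P : Matrix n n 𝕜} (hP : P.PosSemidef) (h : P ≠ 0) :
    0 < (P * P).trace := by
  nth_rewrite 2 [← hP.1.eq]
  exact (posSemidef_self_mul_conjTranspose P).trace_nonneg.lt_of_ne'
    (mt trace_mul_conjTranspose_self_eq_zero_iff.1 h)

end Matrix

section PureState

variable {ι : Type*} [Fintype ι]

theorem posSemidef_pureState (ψ : ι → ℂ) : (pureState ψ).PosSemidef :=
  posSemidef_vecMulVec_self_star ψ

theorem IsUnitVec.trace_pureState {ψ : ι → ℂ} (hψ : IsUnitVec ψ) : (pureState ψ).trace = 1 := by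
  rw [← hψ]
  simp [trace, pureState, mul_comm]

theorem isUnitVec_single [DecidableEq ι] (k : ι) : IsUnitVec (Pi.single k 1 : ι → ℂ) := by
  simp [IsUnitVec, Pi.single_apply]

end PureState

section PartialTrace

variable {m n R : Type*} [Fintype m]

def partialTraceFst [AddCommMonoid R] (M : Matrix (m × n) (m × n) R) : Matrix n n R :=
  ∑ k, M.submatrix (Prod.mk k) (Prod.mk k)

theorem partialTraceFst_apply [AddCommMonoid R] (M : Matrix (m × n) (m × n) R) (a b : n) :
    partialTraceFst M a b = ∑ k, M (k, a) (k, b) := by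
  simp [partialTraceFst, Matrix.sum_apply]

theorem Matrix.PosSemidef.partialTraceFst [Ring R] [PartialOrder R] [StarRing R] [AddLeftMono R]
    {M : Matrix (m × n) (m × n) R} (hM : M.PosSemidef) : (partialTraceFst M).PosSemidef :=
  posSemidef_sum _ fun _ _ => hM.submatrix _

variable [Fintype n]

theorem trace_partialTraceFst [AddCommMonoid R] (M : Matrix (m × n) (m × n) R) :
    (partialTraceFst M).trace = M.trace := by
  simp [trace, partialTraceFst_apply, Fintype.sum_prod_type, Finset.sum_comm (γ := m)]

theorem trace_partialTraceFst_mul [NonUnitalNonAssocSemiring R]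
    (M N : Matrix (m × n) (m × n) R) :
    (partialTraceFst M * partialTraceFst N).trace =
      ∑ k, ∑ l,
        (M.submatrix (Prod.mk k) (Prod.mk k) * N.submatrix (Prod.mk l) (Prod.mk l)).trace := by
  simp only [partialTraceFst, Finset.sum_mul_sum, trace_sum]

end PartialTrace

section Channel

variable {d₀ n d₁ : ℕ}

theorem IsChannel.trace_apply {E : Matrix (Fin d₀) (Fin d₀) ℂ →ₗ[ℂ] Mat n} (hE : IsChannel E)
    (X : Matrix (Fin d₀) (Fin d₀) ℂ) : (E X).trace = X.trace := by
  obtain ⟨p, K, hK, hN⟩ := hE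
  calc (E X).trace = (∑ i, (K i)ᴴ * K i * X).trace := by
        simp only [hK, trace_sum, trace_mul_cycle _ X]
    _ = X.trace := by rw [← Finset.sum_mul, hN, one_mul]

theorem tensorId_apply (Φ : Matrix (Fin d₀) (Fin d₀) ℂ →ₗ[ℂ] Mat n)
    (M : Matrix (Fin d₀ × Fin d₁) (Fin d₀ × Fin d₁) ℂ) (k l : Fin n) (a b : Fin d₁) :
    tensorId Φ M (k, a) (l, b) = Φ (Matrix.of fun x y => M (x, a) (y, b)) k l := rfl

theorem tensorId_comp {m : ℕ} (Φ : Mat m →ₗ[ℂ] Mat n) (E : Matrix (Fin d₀) (Fin d₀) ℂ →ₗ[ℂ] Mat m)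
    (M : Matrix (Fin d₀ × Fin d₁) (Fin d₀ × Fin d₁) ℂ) :
    tensorId (Φ ∘ₗ E) M = tensorId Φ (tensorId E M) := rfl

theorem IsChannel.partialTraceFst_tensorId {E : Matrix (Fin d₀) (Fin d₀) ℂ →ₗ[ℂ] Mat n}
    (hE : IsChannel E) (M : Matrix (Fin d₀ × Fin d₁) (Fin d₀ × Fin d₁) ℂ) :
    partialTraceFst (tensorId E M) = partialTraceFst M := by
  ext a b
  simpa [partialTraceFst_apply, tensorId_apply, trace] using
    hE.trace_apply (Matrix.of fun x y => M (x, a) (y, b))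

open scoped Kronecker in
theorem tensorId_eq_sum_kronecker {p : ℕ} {E : Matrix (Fin d₀) (Fin d₀) ℂ →ₗ[ℂ] Mat n}
    {K : Fin p → Matrix (Fin n) (Fin d₀) ℂ} (hK : ∀ X, E X = ∑ i, K i * X * (K i)ᴴ)
    (M : Matrix (Fin d₀ × Fin d₁) (Fin d₀ × Fin d₁) ℂ) :
    tensorId E M = ∑ i, (K i ⊗ₖ (1 : Mat d₁)) * M * (K i ⊗ₖ (1 : Mat d₁))ᴴ := by
  ext ⟨k, a⟩ ⟨l, b⟩
  simp only [tensorId_apply, hK, Matrix.sum_apply, mul_apply, of_apply, conjTranspose_apply,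
    kroneckerMap_apply, one_apply, Fintype.sum_prod_type, Finset.sum_mul, mul_ite, mul_one,
    mul_zero, ite_mul, zero_mul, Finset.sum_ite_eq, Finset.mem_univ, if_true]
  refine Finset.sum_congr rfl fun c _ => Finset.sum_congr rfl fun y _ => ?_
  simp [apply_ite (starRingEnd ℂ), mul_ite, Finset.sum_ite_eq]

theorem IsChannel.posSemidef_tensorId {E : Matrix (Fin d₀) (Fin d₀) ℂ →ₗ[ℂ] Mat n}
    (hE : IsChannel E) {M : Matrix (Fin d₀ × Fin d₁) (Fin d₀ × Fin d₁) ℂ} (hM : M.PosSemidef) :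
    (tensorId E M).PosSemidef := by
  obtain ⟨p, K, hK, -⟩ := hE
  rw [tensorId_eq_sum_kronecker hK]
  exact posSemidef_sum _ fun _ _ => hM.mul_mul_conjTranspose_same _

end Channel

section ClassicalChannel

variable {d : ℕ}

theorem classicalChannel_apply (A : Matrix (Fin d) (Fin d) ℝ) (X : Mat d) (i j : Fin d) :
    classicalChannel A X i j = if i = j then ∑ k, (A i k : ℂ) * X k k else 0 := by
  simp [classicalChannel, cducMap]

theorem classicalChannel_pureState_single (A : Matrix (Fin d) (Fin d) ℝ) (k : Fin d) :
    classicalChannel A (pureState (Pi.single k 1)) = diagonal fun i => (A i k : ℂ) := by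
  ext i j
  simp [classicalChannel_apply, pureState, diagonal_apply, Pi.single_apply]

theorem trace_tensorId_classicalChannel_mul {d₁ : ℕ} (A : Matrix (Fin d) (Fin d) ℝ)
    (ρ τ : Matrix (Fin d × Fin d₁) (Fin d × Fin d₁) ℂ) :
    (tensorId (classicalChannel A) ρ * tensorId (classicalChannel A) τ).trace =
      ∑ k, ∑ l, ((∑ i, A i k * A i l : ℝ) : ℂ) *
        (ρ.submatrix (Prod.mk k) (Prod.mk k) * τ.submatrix (Prod.mk l) (Prod.mk l)).trace := by
  calc _ = ∑ i, ((∑ k, (A i k : ℂ) • ρ.submatrix (Prod.mk k) (Prod.mk k)) *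
          (∑ l, (A i l : ℂ) • τ.submatrix (Prod.mk l) (Prod.mk l))).trace := by
        simp [trace, mul_apply, Fintype.sum_prod_type, tensorId_apply, classicalChannel_apply,
          Matrix.sum_apply]
    _ = ∑ i, ∑ k, ∑ l, (A i k * A i l : ℂ) *
          (ρ.submatrix (Prod.mk k) (Prod.mk k) * τ.submatrix (Prod.mk l) (Prod.mk l)).trace := by
        simp only [Finset.sum_mul_sum, trace_sum, smul_mul_smul_comm, trace_smul, smul_eq_mul]
    _ = _ := by
        rw [Finset.sum_comm]
        refine Finset.sum_congr rfl fun k _ => ?_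
        rw [Finset.sum_comm]
        push_cast
        simp only [Finset.sum_mul]

theorem classicalChannel_mul (A B : Matrix (Fin d) (Fin d) ℝ) :
    classicalChannel A * classicalChannel B = classicalChannel (A * B) := by
  ext X i j
  simp only [Module.End.mul_apply, classicalChannel_apply, mul_apply]
  split_ifs
  · simp only [Complex.ofReal_sum, Complex.ofReal_mul, Finset.mul_sum, Finset.sum_mul, mul_assoc]
    exact Finset.sum_comm
  · rfl

theorem classicalChannel_pow (A : Matrix (Fin d) (Fin d) ℝ) {k : ℕ} (hk : 1 ≤ k) :
    classicalChannel A ^ k = classicalChannel (A ^ k) := by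
  induction k, hk using Nat.le_induction with
  | base => simp
  | succ k _ ih => rw [pow_succ, ih, classicalChannel_mul, ← pow_succ]

end ClassicalChannel

section Stochastic

variable {d : ℕ} {A : Matrix (Fin d) (Fin d) ℝ}

theorem columnStochastic_iff_mem_colStochastic :
    ColumnStochastic A ↔ A ∈ colStochastic ℝ (Fin d) :=
  mem_colStochastic_iff_sum.symm

theorem ColumnStochastic.pow (hA : ColumnStochastic A) (k : ℕ) : ColumnStochastic (A ^ k) :=
  columnStochastic_iff_mem_colStochastic.2
    (pow_mem (columnStochastic_iff_mem_colStochastic.1 hA) k)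

theorem CScrambling.matScrambling (hA : ColumnStochastic A)
    (h : CScrambling (classicalChannel A)) : MatScrambling A := by
  intro k l
  obtain rfl | hkl := eq_or_ne k l
  · obtain ⟨i, -, hi⟩ := Finset.exists_ne_zero_of_sum_ne_zero (s := Finset.univ)
      ((hA.2 k).symm ▸ one_ne_zero)
    exact ⟨i, mul_self_pos.2 hi⟩
  · have horth :
        ∑ i, star ((Pi.single k 1 : Fin d → ℂ) i) * (Pi.single l 1 : Fin d → ℂ) i = 0 := by
      simp [Pi.single_apply, hkl.symm]
    have hpos := h _ _ (isUnitVec_single k) (isUnitVec_single l) horth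
    simp only [classicalChannel_pureState_single, diagonal_mul_diagonal, trace_diagonal] at hpos
    norm_cast at hpos
    obtain ⟨i, -, hi⟩ := Finset.exists_lt_of_sum_lt (s := Finset.univ) (f := fun _ => (0 : ℝ))
      (by simpa using hpos)
    exact ⟨i, hi⟩

theorem MatScrambling.sum_mul_pos (hA : ∀ i j, 0 ≤ A i j) (h : MatScrambling A) (k l : Fin d) :
    0 < ∑ i, A i k * A i l := by
  obtain ⟨i, hi⟩ := h k l
  exact Finset.sum_pos' (fun j _ => mul_nonneg (hA j k) (hA j l)) ⟨i, Finset.mem_univ _, hi⟩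

theorem MatScrambling.vanishingC0E_classicalChannel (hA : ∀ i j, 0 ≤ A i j)
    (hs : MatScrambling A) : VanishingC0E (classicalChannel A) := by
  intro d₀ d₁ _ _ ψ hψ E₁ E₂ hE₁ hE₂
  have hσ : partialTraceFst (pureState ψ) ≠ 0 := fun h0 => by
    simpa [h0] using (trace_partialTraceFst (pureState ψ)).trans hψ.trace_pureState
  have hρ₁ := hE₁.posSemidef_tensorId (posSemidef_pureState ψ)
  have hρ₂ := hE₂.posSemidef_tensorId (posSemidef_pureState ψ)
  rw [tensorId_comp, tensorId_comp, trace_tensorId_classicalChannel_mul,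
    ← Fintype.sum_prod_type']
  refine Finset.sum_mul_pos_of_pos_of_nonneg
    (fun p => by exact_mod_cast hs.sum_mul_pos hA p.1 p.2)
    (fun p => (hρ₁.submatrix _).trace_mul_nonneg (hρ₂.submatrix _)) ?_
  simp only [Fintype.sum_prod_type]
  rw [← trace_partialTraceFst_mul, hE₁.partialTraceFst_tensorId, hE₂.partialTraceFst_tensorId]
  exact (posSemidef_pureState ψ).partialTraceFst.trace_mul_self_pos hσ

end Stochastic

section Preparation

variable {n : ℕ}

def prepare (u : Fin n → ℂ) : Mat 1 →ₗ[ℂ] Mat n where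
  toFun X := X 0 0 • pureState u
  map_add' X Y := by simp [add_smul]
  map_smul' c X := by simp [smul_smul]

theorem IsUnitVec.isChannel_prepare {u : Fin n → ℂ} (hu : IsUnitVec u) :
    IsChannel (prepare u) := by
  refine ⟨1, fun _ => replicateCol (Fin 1) u, fun X => ?_, ?_⟩
  · ext r s
    simp only [prepare, pureState, LinearMap.coe_mk, AddHom.coe_mk, smul_of, of_apply,
      Pi.smul_apply, smul_eq_mul, Matrix.sum_apply, mul_apply, replicateCol_apply,
      conjTranspose_replicateCol, replicateRow_apply, Pi.star_apply, Finset.univ_unique,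
      Finset.sum_singleton, Fin.default_eq_zero]
    ring
  · ext a b
    simpa [mul_apply, one_apply, Subsingleton.elim a b, IsUnitVec] using hu

theorem trace_tensorId_prepare_mul (Φ : Mat n →ₗ[ℂ] Mat n) (u v : Fin n → ℂ) :
    (tensorId (Φ ∘ₗ prepare u) (pureState (1 : Fin 1 × Fin 1 → ℂ)) *
      tensorId (Φ ∘ₗ prepare v) (pureState 1)).trace =
      (Φ (pureState u) * Φ (pureState v)).trace := by
  simp [trace, mul_apply, Fintype.sum_prod_type, tensorId_apply, prepare, pureState]

theorem VanishingC0E.cScrambling {Φ : Mat n →ₗ[ℂ] Mat n} (h : VanishingC0E Φ) :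
    CScrambling Φ := fun ψ φ hψ hφ _ =>
  trace_tensorId_prepare_mul Φ ψ φ ▸
    h 1 1 one_pos one_pos 1 (by simp [IsUnitVec]) _ _ hψ.isChannel_prepare hφ.isChannel_prepare

end Preparation

theorem cScrambling_classicalChannel_iff {d : ℕ} {A : Matrix (Fin d) (Fin d) ℝ}
    (hA : ColumnStochastic A) :
    CScrambling (classicalChannel A) ↔ VanishingC0E (classicalChannel A) :=
  ⟨fun h => (h.matScrambling hA).vanishingC0E_classicalChannel hA.1, VanishingC0E.cScrambling⟩

/-- If the classical channel `Φ_A` of a column stochastic matrix `A` is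
c-scrambling, then its one-shot zero-error entanglement-assisted classical capacity
vanishes; consequently `c(Φ_A) = c_E(Φ_A)`. -/
theorem classical_scrambling_ea (d : ℕ) (A : Matrix (Fin d) (Fin d) ℝ)
    (hA : ColumnStochastic A) :
    (CScrambling (classicalChannel A) → VanishingC0E (classicalChannel A)) ∧
    cTime (classicalChannel A) = cETime (classicalChannel A) := by
  refine ⟨(cScrambling_classicalChannel_iff hA).1, ?_⟩
  unfold cTime cETime
  congr 1
  ext N
  refine exists_congr fun k => and_congr_right fun _ => and_congr_right fun hk => ?_
  rw [classicalChannel_pow A hk]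
  exact cScrambling_classicalChannel_iff (hA.pow k)
end

section
/- Let Φ be a unital quantum channel on M_d(ℂ) that is c-scrambling. Then Φ is fully irreducible: there do not exist orthogonal projections P, Q ∈ M_d(ℂ) with P, Q ∉ {0, 1}, Tr P = Tr Q, and Φ(P) ≤ λQ (in the positive semidefinite order) for some λ > 0. -/
open Matrix Filter
open scoped ComplexOrder

/-!
Put `T = Φ P`. Since `0 ≤ T ≤ λ Q`, `T` lives on the range of `Q`, and unitality gives `T ≤ 1`;
hence `Q - T = Q (1 - T) Q ≥ 0`, a positive matrix of trace `Tr Q - Tr P = 0`. So `Φ P = Q` and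
`Φ (1 - P) = 1 - Q`. Unit vectors `ψ ∈ ran P` and `φ ∈ ran (1 - P)` are orthogonal, but their
outputs satisfy `Φ |ψ⟩⟨ψ| ≤ Q` and `Φ |φ⟩⟨φ| ≤ 1 - Q`, so their overlap is zero, contradicting
c-scrambling.
-/

open scoped MatrixOrder Matrix.Norms.L2Operator

theorem IsStarProjection.mul_eq_zero_of_le_of_le_one_sub {A : Type*} [CStarAlgebra A]
    [PartialOrder A] [StarOrderedRing A] {a b e : A} (he : IsStarProjection e)
    (ha : 0 ≤ a) (hae : a ≤ e) (hb : 0 ≤ b) (hbe : b ≤ 1 - e) : a * b = 0 := by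
  obtain ⟨hae, -⟩ := he.mul_right_and_mul_left_of_nonneg_of_le ha hae
  obtain ⟨-, hbe⟩ := he.one_sub.mul_right_and_mul_left_of_nonneg_of_le hb hbe
  rw [← hae, ← hbe, mul_assoc, ← mul_assoc e, he.mul_one_sub_self, zero_mul, mul_zero]

theorem Matrix.eq_of_le_smul_of_trace_eq {n : Type*} [Fintype n] [DecidableEq n]
    {T Q : Matrix n n ℂ} (hQ : IsStarProjection Q) (hT : 0 ≤ T) (hT1 : T ≤ 1) {c : ℝ}
    (hc : 0 < c) (hTQ : T ≤ (c : ℂ) • Q) (htr : T.trace = Q.trace) : T = Q := by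
  have hc_inv : (0 : ℂ) ≤ (c : ℂ)⁻¹ := by positivity
  have hc0 : (c : ℂ) ≠ 0 := by exact_mod_cast hc.ne'
  have hscaled : (c : ℂ)⁻¹ • T ≤ Q := by
    have := smul_le_smul_of_nonneg_left hTQ hc_inv
    rwa [smul_smul, inv_mul_cancel₀ hc0, one_smul] at this
  obtain ⟨hTQ', hQT'⟩ :=
    hQ.mul_right_and_mul_left_of_nonneg_of_le (smul_nonneg hc_inv hT) hscaled
  have hTQ_eq : T * Q = T :=
    smul_right_injective _ (inv_ne_zero hc0) <| (smul_mul_assoc _ T Q).symm.trans hTQ'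
  have hQT_eq : Q * T = T :=
    smul_right_injective _ (inv_ne_zero hc0) <| (mul_smul_comm _ Q T).symm.trans hQT'
  have hsub : 0 ≤ Q - T := by
    have := star_left_conjugate_nonneg (sub_nonneg.2 hT1) Q
    rwa [hQ.isSelfAdjoint.star_eq, mul_sub, sub_mul, mul_one, hQ.isIdempotentElem.eq, mul_assoc,
      hTQ_eq, hQT_eq] at this
  refine (sub_eq_zero.1 (hsub.posSemidef.trace_eq_zero_iff.1 ?_)).symm
  rw [trace_sub, htr, sub_self]

section PureState

variable {n : Type*} [Fintype n]

theorem isStarProjection_pureState {ψ : n → ℂ} (hψ : IsUnitVec ψ) :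
    IsStarProjection (pureState ψ) where
  isIdempotentElem := by
    change vecMulVec ψ (star ψ) * vecMulVec ψ (star ψ) = vecMulVec ψ (star ψ)
    rw [vecMulVec_mul_vecMulVec, show star ψ ⬝ᵥ ψ = 1 from hψ, one_smul]
  isSelfAdjoint := by
    change star (vecMulVec ψ (star ψ)) = vecMulVec ψ (star ψ)
    rw [star_eq_conjTranspose, conjTranspose_vecMulVec, star_star]

theorem pureState_le {P : Matrix n n ℂ} (hP : IsStarProjection P) {ψ : n → ℂ}
    (hψ : IsUnitVec ψ) (hPψ : P *ᵥ ψ = ψ) : pureState ψ ≤ P :=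
  (isStarProjection_pureState hψ).le_of_mul_eq_right hP <| by
    change P * vecMulVec ψ (star ψ) = vecMulVec ψ (star ψ)
    rw [mul_vecMulVec, hPψ]

theorem exists_isUnitVec_mulVec_eq [DecidableEq n] {P : Matrix n n ℂ} (hP : IsIdempotentElem P)
    (hP0 : P ≠ 0) : ∃ ψ, IsUnitVec ψ ∧ P *ᵥ ψ = ψ := by
  obtain ⟨j, hj⟩ : ∃ j, P *ᵥ Pi.single j 1 ≠ 0 := by
    by_contra! h
    exact hP0 (ext fun i j => by simpa using congrFun (h j) i)
  set v := P *ᵥ Pi.single j 1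
  have hpos : 0 < star v ⬝ᵥ v := dotProduct_star_self_pos_iff.2 hj
  set r := (star v ⬝ᵥ v).re
  have hr : 0 < r := (Complex.pos_iff.1 hpos).1
  have hvr : star v ⬝ᵥ v = r := Complex.eq_re_of_ofReal_le (r := 0) (by simp)
  refine ⟨(((√r)⁻¹ : ℝ) : ℂ) • v, ?_, ?_⟩
  · change star (_ • v) ⬝ᵥ (_ • v) = 1
    rw [star_smul, smul_dotProduct, dotProduct_smul, hvr, Complex.star_def, Complex.conj_ofReal,
      smul_eq_mul, smul_eq_mul, ← mul_assoc]
    have : (√r)⁻¹ * (√r)⁻¹ * r = 1 := by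
      rw [← mul_inv, Real.mul_self_sqrt hr.le, inv_mul_cancel₀ hr.ne']
    exact_mod_cast this
  · rw [mulVec_smul, mulVec_mulVec, hP.eq]

theorem IsStarProjection.star_dotProduct_eq_zero [DecidableEq n] {P : Matrix n n ℂ}
    (hP : IsStarProjection P) {ψ φ : n → ℂ} (hψ : P *ᵥ ψ = ψ) (hφ : (1 - P) *ᵥ φ = φ) :
    star ψ ⬝ᵥ φ = 0 := by
  rw [← hψ, ← hφ, star_mulVec, ← dotProduct_mulVec, mulVec_mulVec, ← star_eq_conjTranspose,
    hP.isSelfAdjoint.star_eq, hP.mul_one_sub_self, zero_mulVec, dotProduct_zero]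

end PureState

namespace IsChannel

variable {m n : ℕ} {Φ : Matrix (Fin m) (Fin m) ℂ →ₗ[ℂ] Mat n}

theorem map_nonneg (hΦ : IsChannel Φ) {X : Matrix (Fin m) (Fin m) ℂ} (hX : 0 ≤ X) :
    0 ≤ Φ X := by
  obtain ⟨p, K, hK, -⟩ := hΦ
  rw [hK, nonneg_iff_posSemidef]
  exact posSemidef_sum _ fun i _ => hX.posSemidef.mul_mul_conjTranspose_same (K i)

theorem monotone (hΦ : IsChannel Φ) : Monotone Φ := fun X Y hXY =>
  sub_nonneg.1 <| map_sub Φ Y X ▸ hΦ.map_nonneg (sub_nonneg.2 hXY)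

theorem trace_map (hΦ : IsChannel Φ) (X : Matrix (Fin m) (Fin m) ℂ) :
    (Φ X).trace = X.trace := by
  obtain ⟨p, K, hK, hsum⟩ := hΦ
  rw [hK, trace_sum]
  simp_rw [trace_mul_cycle (K _) X]
  rw [← trace_sum, ← Finset.sum_mul, hsum, one_mul]

end IsChannel

/-- A unital c-scrambling channel is fully irreducible: there is no pair
of nontrivial equivalent orthogonal projections `P ∼ Q` with `Φ(P) ≤ λ Q`. -/
theorem unital_scrambling_fully_irreducible (d : ℕ) (Φ : Module.End ℂ (Mat d))
    (hΦ : IsChannel Φ) (hunital : Φ 1 = 1) (hscr : CScrambling Φ) :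
    ¬ ∃ (P Q : Mat d) (lam : ℝ),
        Pᴴ = P ∧ P * P = P ∧ Qᴴ = Q ∧ Q * Q = Q ∧
        P ≠ 0 ∧ P ≠ 1 ∧ Q ≠ 0 ∧ Q ≠ 1 ∧ P.trace = Q.trace ∧
        0 < lam ∧ ((lam : ℂ) • Q - Φ P).PosSemidef := by
  rintro ⟨P, Q, lam, hPh, hP2, hQh, hQ2, hP0, hP1, -, -, htr, hlam, hle⟩
  have hP : IsStarProjection P := ⟨hP2, hPh⟩
  have hQ : IsStarProjection Q := ⟨hQ2, hQh⟩
  have hΦP : Φ P = Q := by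
    refine eq_of_le_smul_of_trace_eq hQ (hΦ.map_nonneg hP.nonneg) ?_ hlam hle
      (by rw [hΦ.trace_map, htr])
    simpa [hunital] using hΦ.monotone hP.le_one
  obtain ⟨ψ, hψ, hPψ⟩ := exists_isUnitVec_mulVec_eq hP.isIdempotentElem hP0
  obtain ⟨φ, hφ, hPφ⟩ :=
    exists_isUnitVec_mulVec_eq hP.one_sub.isIdempotentElem (sub_ne_zero.2 hP1.symm)
  have hψQ : Φ (pureState ψ) ≤ Q := hΦP ▸ hΦ.monotone (pureState_le hP hψ hPψ)
  have hφQ : Φ (pureState φ) ≤ 1 - Q := by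
    simpa [hunital, hΦP] using hΦ.monotone (pureState_le hP.one_sub hφ hPφ)
  have hpos := hscr ψ φ hψ hφ (hP.star_dotProduct_eq_zero hPψ hPφ)
  rw [hQ.mul_eq_zero_of_le_of_le_one_sub (hΦ.map_nonneg (isStarProjection_pureState hψ).nonneg)
    hψQ (hΦ.map_nonneg (isStarProjection_pureState hφ).nonneg) hφQ, trace_zero] at hpos
  exact hpos.false
end

section
/- Let Φ be a unital quantum channel on M_d(ℂ) with d ≥ 2. (i) If Φ is c-scrambling, then Φ^{d−1} is strictly positive, i.e. Φ^{d−1}(ρ) is positive definite for every quantum state ρ. (ii) Consequently, if Φ is primitive and unital, then c(Φ) ≤ w(Φ) ≤ (d − 1)·c(Φ). -/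
open Matrix Filter
open scoped ComplexOrder

/-!
Let `Φ` be a unital channel, `ρ` a state and suppose `σ = Φ ρ` is singular. With `P` the
projection onto `ker σ` and `Q = Φ† P`, unitality and trace preservation give `0 ≤ Q ≤ 1` and
`tr Q = tr P = d - rank σ`, while `tr (Q ρ) = tr (P σ) = 0` forces `Q ρ = 0`, whence
`rank Q + rank ρ ≤ d`. If `rank σ ≤ rank ρ` this yields `rank Q ≤ tr Q`, so every nonzero eigenvalue
of `Q` equals `1`. An eigenvector `φ` of `Q` for `1` and an orthogonal `ψ ∈ ker Q` are then sent to
outputs `Φ φ` supported in the range of `P` and `Φ ψ` supported in `ker P`: the outputs are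
orthogonal, contradicting c-scrambling. So the rank grows at each step until it is full, and `d - 1`
steps suffice starting from rank `1`. Applying this to `Φ ^ c(Φ)` gives `w(Φ) ≤ (d - 1) c(Φ)`;
conversely a strictly positive channel is c-scrambling because `0 < tr (A B)` whenever `A` is
positive definite and `B ≠ 0` is positive semidefinite.
-/

theorem eq_one_of_card_ne_zero_le_sum {ι : Type*} [Fintype ι] {f : ι → ℝ} (hf : ∀ i, f i ≤ 1)
    (h : (Fintype.card {i // f i ≠ 0} : ℝ) ≤ ∑ i, f i) {i : ι} (hi : f i ≠ 0) : f i = 1 := by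
  have hsum : ∑ j ∈ Finset.univ.filter (f · ≠ 0), (1 - f j) = 0 := by
    refine le_antisymm ?_ (Finset.sum_nonneg fun j _ => sub_nonneg.mpr (hf j))
    rw [Finset.sum_sub_distrib, Finset.sum_filter_ne_zero]
    simpa [Fintype.card_subtype] using h
  have := (Finset.sum_eq_zero_iff_of_nonneg fun j _ => sub_nonneg.mpr (hf j)).mp hsum i (by simpa)
  linarith

namespace Matrix

open scoped MatrixOrder

variable {n : Type*} [Fintype n] [DecidableEq n]

theorem PosSemidef.trace_mul_eq_trace_conjTranspose_mul_self {A B : Matrix n n ℂ}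
    (hA : A.PosSemidef) (hB : B.PosSemidef) :
    (A * B).trace = ((CFC.sqrt A * CFC.sqrt B)ᴴ * (CFC.sqrt A * CFC.sqrt B)).trace := by
  have hsA : (CFC.sqrt A)ᴴ = CFC.sqrt A := (CFC.sqrt_nonneg A).posSemidef.isHermitian
  have hsB : (CFC.sqrt B)ᴴ = CFC.sqrt B := (CFC.sqrt_nonneg B).posSemidef.isHermitian
  calc (A * B).trace = (CFC.sqrt A * CFC.sqrt A * (CFC.sqrt B * CFC.sqrt B)).trace := by
        rw [CFC.sqrt_mul_sqrt_self A hA.nonneg, CFC.sqrt_mul_sqrt_self B hB.nonneg]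
    _ = _ := by
        rw [conjTranspose_mul, hsA, hsB]
        simp only [mul_assoc]
        rw [trace_mul_comm (CFC.sqrt B)]
        simp only [mul_assoc]

theorem PosSemidef.trace_mul_nonneg_s11 {A B : Matrix n n ℂ} (hA : A.PosSemidef) (hB : B.PosSemidef) :
    0 ≤ (A * B).trace := by
  rw [hA.trace_mul_eq_trace_conjTranspose_mul_self hB]
  exact (posSemidef_conjTranspose_mul_self _).trace_nonneg

theorem PosSemidef.mul_eq_zero_of_trace_mul_eq_zero {A B : Matrix n n ℂ} (hA : A.PosSemidef)
    (hB : B.PosSemidef) (h : (A * B).trace = 0) : A * B = 0 := by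
  rw [hA.trace_mul_eq_trace_conjTranspose_mul_self hB,
    trace_conjTranspose_mul_self_eq_zero_iff] at h
  rw [← CFC.sqrt_mul_sqrt_self A hA.nonneg, ← CFC.sqrt_mul_sqrt_self B hB.nonneg, mul_assoc,
    ← mul_assoc (CFC.sqrt A) (CFC.sqrt B), h, zero_mul, mul_zero]

theorem PosDef.trace_mul_pos {A B : Matrix n n ℂ} (hA : A.PosDef) (hB : B.PosSemidef)
    (hB0 : B ≠ 0) : 0 < (A * B).trace := by
  refine (hA.posSemidef.trace_mul_nonneg_s11 hB).lt_of_ne fun h => hB0 ?_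
  have hAB := hA.posSemidef.mul_eq_zero_of_trace_mul_eq_zero hB h.symm
  rwa [← hA.isUnit.mul_right_eq_zero]

theorem PosSemidef.posDef_of_rank_eq_card {A : Matrix n n ℂ} (hA : A.PosSemidef)
    (h : A.rank = Fintype.card n) : A.PosDef := by
  refine hA.posDef_iff_isUnit.mpr (mulVec_surjective_iff_isUnit.mp ?_)
  refine LinearMap.range_eq_top.mp
    (Submodule.eq_top_of_finrank_eq (S := LinearMap.range A.mulVecLin) ?_)
  simpa [rank] using h

theorem IsHermitian.one_le_rank {A : Matrix n n ℂ} (hA : A.IsHermitian) (h : A ≠ 0) :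
    1 ≤ A.rank := by
  obtain ⟨i, hi⟩ := Function.ne_iff.mp (mt hA.eigenvalues_eq_zero_iff.mp h)
  rw [hA.rank_eq_card_non_zero_eigs]
  exact Fintype.card_pos_iff.mpr ⟨⟨i, hi⟩⟩

open Unitary in
theorem IsHermitian.exists_kernelProjection {A : Matrix n n ℂ} (hA : A.IsHermitian) :
    ∃ P : Matrix n n ℂ, P.PosSemidef ∧ (1 - P).PosSemidef ∧ A * P = 0 ∧
      P.trace = (Fintype.card n - A.rank : ℕ) := by
  set U := hA.eigenvectorUnitary
  let D : Matrix n n ℂ := diagonal fun i => if hA.eigenvalues i = 0 then 1 else 0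
  have conj_posSemidef {X : Matrix n n ℂ} (hX : X.PosSemidef) :
      (conjStarAlgAut ℂ _ U X).PosSemidef := by
    simpa [conjStarAlgAut_apply, star_eq_conjTranspose] using
      hX.mul_mul_conjTranspose_same (U : Matrix n n ℂ)
  refine ⟨conjStarAlgAut ℂ _ U D, conj_posSemidef ?_, ?_, ?_, ?_⟩
  · exact posSemidef_diagonal_iff.mpr fun i => by split_ifs <;> simp
  · rw [← map_one (conjStarAlgAut ℂ _ U), ← map_sub]
    refine conj_posSemidef ?_
    rw [← diagonal_one, diagonal_sub]
    exact posSemidef_diagonal_iff.mpr fun i => by split_ifs <;> simp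
  · conv_lhs => rw [hA.spectral_theorem]
    rw [← map_mul, diagonal_mul_diagonal, ← map_zero (conjStarAlgAut ℂ _ U), ← diagonal_zero]
    congr
    ext i
    simp
  · rw [conjStarAlgAut_apply, trace_mul_cycle, Unitary.coe_star_mul_self, one_mul, trace_diagonal,
      hA.rank_eq_card_non_zero_eigs, ← Fintype.card_subtype_compl, Finset.sum_boole]
    simp [Fintype.card_subtype]

theorem IsHermitian.star_eigenvectorBasis_dotProduct {A : Matrix n n ℂ} (hA : A.IsHermitian)
    (i j : n) :
    star ⇑(hA.eigenvectorBasis i) ⬝ᵥ ⇑(hA.eigenvectorBasis j) = if i = j then 1 else 0 := by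
  rw [dotProduct_comm, ← EuclideanSpace.inner_eq_star_dotProduct, OrthonormalBasis.inner_eq_ite]

theorem IsHermitian.eigenvalues_le_one {A : Matrix n n ℂ} (hA : A.IsHermitian)
    (h : (1 - A).PosSemidef) (i : n) : hA.eigenvalues i ≤ 1 := by
  have := h.re_dotProduct_nonneg (hA.eigenvectorBasis i)
  rw [sub_mulVec, one_mulVec, dotProduct_sub, map_sub, ← hA.eigenvalues_eq,
    hA.star_eigenvectorBasis_dotProduct, if_pos rfl] at this
  simpa using this

theorem IsHermitian.exists_orthonormal_fixed_and_null {A : Matrix n n ℂ} (hA : A.IsHermitian)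
    (h1 : (1 - A).PosSemidef) (htr : (A.rank : ℝ) ≤ A.trace.re) (h0 : A ≠ 0)
    (hlt : A.rank < Fintype.card n) :
    ∃ φ ψ : n → ℂ, star φ ⬝ᵥ φ = 1 ∧ star ψ ⬝ᵥ ψ = 1 ∧ star ψ ⬝ᵥ φ = 0 ∧
      A *ᵥ φ = φ ∧ A *ᵥ ψ = 0 := by
  have hone : ∀ i, hA.eigenvalues i ≠ 0 → hA.eigenvalues i = 1 := by
    refine fun i => eq_one_of_card_ne_zero_le_sum (hA.eigenvalues_le_one h1) ?_
    simpa [← hA.rank_eq_card_non_zero_eigs, hA.trace_eq_sum_eigenvalues] using htr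
  obtain ⟨i, hi⟩ := Function.ne_iff.mp (mt hA.eigenvalues_eq_zero_iff.mp h0)
  obtain ⟨j, hj⟩ : ∃ j, hA.eigenvalues j = 0 := by
    by_contra! hall
    simp [hA.rank_eq_card_non_zero_eigs, hall] at hlt
  have hji : j ≠ i := by rintro rfl; exact hi hj
  refine ⟨hA.eigenvectorBasis i, hA.eigenvectorBasis j, ?_, ?_, ?_, ?_, ?_⟩
  · simp [hA.star_eigenvectorBasis_dotProduct]
  · simp [hA.star_eigenvectorBasis_dotProduct]
  · simp [hA.star_eigenvectorBasis_dotProduct, hji]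
  · simp [hA.mulVec_eigenvectorBasis, hone i hi]
  · simp [hA.mulVec_eigenvectorBasis, hj]

end Matrix

theorem trace_pureState {n : Type*} [Fintype n] (v : n → ℂ) :
    (pureState v).trace = star v ⬝ᵥ v := by
  rw [pureState, ← vecMulVec, trace_vecMulVec, dotProduct_comm]
  rfl

theorem trace_mul_pureState {n : Type*} [Fintype n] (Y : Matrix n n ℂ) (v : n → ℂ) :
    (Y * pureState v).trace = star v ⬝ᵥ (Y *ᵥ v) := by
  rw [pureState, ← vecMulVec, mul_vecMulVec, trace_vecMulVec, dotProduct_comm]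
  rfl

theorem isState_pureState {n : ℕ} {ψ : Fin n → ℂ} (hψ : IsUnitVec ψ) : IsState (pureState ψ) :=
  ⟨posSemidef_vecMulVec_self_star ψ, (trace_pureState ψ).trans hψ⟩

theorem IsState.ne_zero {n : ℕ} {ρ : Mat n} (hρ : IsState ρ) : ρ ≠ 0 := by
  rintro rfl
  simpa using hρ.2

theorem IsState.one_le_rank {n : ℕ} {ρ : Mat n} (hρ : IsState ρ) : 1 ≤ ρ.rank :=
  hρ.1.isHermitian.one_le_rank hρ.ne_zero

section Kraus

variable {ι κ m n : Type*} [Fintype ι] [Fintype κ] [Fintype n]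

def krausMap (K : ι → Matrix m n ℂ) (X : Matrix n n ℂ) : Matrix m m ℂ :=
  ∑ i, K i * X * (K i)ᴴ

theorem posSemidef_krausMap [Fintype m] (K : ι → Matrix m n ℂ) {X : Matrix n n ℂ}
    (hX : X.PosSemidef) : (krausMap K X).PosSemidef :=
  posSemidef_sum _ fun i _ => hX.mul_mul_conjTranspose_same (K i)

theorem krausMap_sub (K : ι → Matrix m n ℂ) (X Y : Matrix n n ℂ) :
    krausMap K (X - Y) = krausMap K X - krausMap K Y := by
  simp only [krausMap, Matrix.mul_sub, Matrix.sub_mul, Finset.sum_sub_distrib]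

theorem krausMap_one [DecidableEq n] (K : ι → Matrix m n ℂ) :
    krausMap K 1 = ∑ i, K i * (K i)ᴴ := by
  simp [krausMap]

theorem trace_krausMap_conjTranspose_mul [Fintype m] (K : ι → Matrix m n ℂ) (Y : Matrix m m ℂ)
    (X : Matrix n n ℂ) :
    (krausMap (fun i => (K i)ᴴ) Y * X).trace = (Y * krausMap K X).trace := by
  simp only [krausMap, conjTranspose_conjTranspose, Finset.sum_mul, Matrix.mul_sum, trace_sum]
  refine Finset.sum_congr rfl fun i _ => ?_
  simp only [Matrix.mul_assoc]
  rw [trace_mul_comm]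
  simp only [Matrix.mul_assoc]

theorem trace_krausMap [Fintype m] [DecidableEq m] [DecidableEq n] {K : ι → Matrix m n ℂ}
    (hK : ∑ i, (K i)ᴴ * K i = 1) (X : Matrix n n ℂ) : (krausMap K X).trace = X.trace := by
  simpa [krausMap_one, hK] using (trace_krausMap_conjTranspose_mul K 1 X).symm

theorem krausMap_krausMap {o : Type*} [Fintype o] (K : ι → Matrix m n ℂ) (L : κ → Matrix n o ℂ)
    (X : Matrix o o ℂ) :
    krausMap K (krausMap L X) = krausMap (fun ij : ι × κ => K ij.1 * L ij.2) X := by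
  simp [krausMap, Matrix.mul_sum, Matrix.sum_mul, Fintype.sum_prod_type, Matrix.mul_assoc]

theorem sum_conjTranspose_mul_self_prod [Fintype m] [DecidableEq n] {o : Type*} [Fintype o]
    [DecidableEq o] {K : ι → Matrix m n ℂ} {L : κ → Matrix n o ℂ}
    (hK : ∑ i, (K i)ᴴ * K i = 1) (hL : ∑ j, (L j)ᴴ * L j = 1) :
    ∑ ij : ι × κ, (K ij.1 * L ij.2)ᴴ * (K ij.1 * L ij.2) = 1 := by
  rw [Fintype.sum_prod_type_right]
  calc _ = ∑ j, (L j)ᴴ * (∑ i, (K i)ᴴ * K i) * L j := by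
        simp [Matrix.mul_sum, Matrix.sum_mul, Matrix.mul_assoc]
    _ = 1 := by simp [hK, hL]

theorem trace_krausMap_pureState_mul_eq_zero [Fintype m] [DecidableEq m] [DecidableEq n]
    {K : ι → Matrix m n ℂ} (hK : ∑ i, (K i)ᴴ * K i = 1) {P : Matrix m m ℂ} (hP : P.PosSemidef)
    (h1P : (1 - P).PosSemidef) {φ ψ : n → ℂ}
    (hQφ : krausMap (fun i => (K i)ᴴ) P *ᵥ φ = φ) (hQψ : krausMap (fun i => (K i)ᴴ) P *ᵥ ψ = 0) :
    (krausMap K (pureState ψ) * krausMap K (pureState φ)).trace = 0 := by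
  set A := krausMap K (pureState ψ)
  set B := krausMap K (pureState φ)
  have hA : A.PosSemidef := posSemidef_krausMap K (posSemidef_vecMulVec_self_star ψ)
  have hB : B.PosSemidef := posSemidef_krausMap K (posSemidef_vecMulVec_self_star φ)
  have trace_P_mul (v : n → ℂ) : (P * krausMap K (pureState v)).trace =
      star v ⬝ᵥ (krausMap (fun i => (K i)ᴴ) P *ᵥ v) := by
    rw [← trace_krausMap_conjTranspose_mul, trace_mul_pureState]
  have hAP : A * P = 0 := by
    have := hP.mul_eq_zero_of_trace_mul_eq_zero hA (by rw [trace_P_mul, hQψ, dotProduct_zero])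
    simpa [hP.isHermitian.eq, hA.isHermitian.eq] using congrArg conjTranspose this
  have hPB : P * B = B := by
    have htr : ((1 - P) * B).trace = 0 := by
      rw [Matrix.sub_mul, one_mul, trace_sub, trace_P_mul, hQφ, trace_krausMap hK,
        trace_pureState, sub_self]
    have := h1P.mul_eq_zero_of_trace_mul_eq_zero hB htr
    rwa [Matrix.sub_mul, one_mul, sub_eq_zero, eq_comm] at this
  rw [← hPB, ← Matrix.mul_assoc, hAP, Matrix.zero_mul, trace_zero]

end Kraus

theorem isChannel_iff_krausMap {m n : ℕ} {Φ : Matrix (Fin m) (Fin m) ℂ →ₗ[ℂ] Mat n} :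
    IsChannel Φ ↔ ∃ (p : ℕ) (K : Fin p → Matrix (Fin n) (Fin m) ℂ),
      (∀ X, Φ X = krausMap K X) ∧ ∑ i, (K i)ᴴ * K i = 1 :=
  Iff.rfl

theorem isChannel_of_krausMap {ι : Type*} [Fintype ι] {m n : ℕ}
    {Φ : Matrix (Fin m) (Fin m) ℂ →ₗ[ℂ] Mat n} (K : ι → Matrix (Fin n) (Fin m) ℂ)
    (hΦ : ∀ X, Φ X = krausMap K X) (hK : ∑ i, (K i)ᴴ * K i = 1) : IsChannel Φ := by
  let e := Fintype.equivFin ι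
  refine ⟨Fintype.card ι, K ∘ e.symm, fun X => ?_, ?_⟩
  · rw [hΦ, krausMap, ← e.symm.sum_comp]
    rfl
  · rw [← hK, ← e.symm.sum_comp]
    rfl

namespace IsChannel

variable {d : ℕ}

theorem isState_apply {m n : ℕ} {Φ : Matrix (Fin m) (Fin m) ℂ →ₗ[ℂ] Mat n} (hΦ : IsChannel Φ)
    {ρ : Matrix (Fin m) (Fin m) ℂ} (hρ : IsState ρ) : IsState (Φ ρ) := by
  obtain ⟨p, K, hΦK, hK⟩ := isChannel_iff_krausMap.mp hΦ
  rw [hΦK]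
  exact ⟨posSemidef_krausMap K hρ.1, (trace_krausMap hK ρ).trans hρ.2⟩

theorem one : IsChannel (1 : Module.End ℂ (Mat d)) :=
  isChannel_of_krausMap (fun _ : Unit => 1) (fun X => by simp [krausMap]) (by simp)

theorem mul {Φ Ψ : Module.End ℂ (Mat d)} (hΦ : IsChannel Φ) (hΨ : IsChannel Ψ) :
    IsChannel (Φ * Ψ) := by
  obtain ⟨p, K, hΦK, hK⟩ := isChannel_iff_krausMap.mp hΦ
  obtain ⟨q, L, hΨL, hL⟩ := isChannel_iff_krausMap.mp hΨ
  exact isChannel_of_krausMap _ (fun X => by rw [Module.End.mul_apply, hΨL, hΦK, krausMap_krausMap])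
    (sum_conjTranspose_mul_self_prod hK hL)

theorem pow {Φ : Module.End ℂ (Mat d)} (hΦ : IsChannel Φ) (k : ℕ) : IsChannel (Φ ^ k) := by
  induction k with
  | zero => exact one
  | succ k ih => exact pow_succ Φ k ▸ ih.mul hΦ

end IsChannel

namespace CScrambling

variable {d : ℕ} {Φ : Module.End ℂ (Mat d)}

theorem rank_lt_rank_apply (hΦ : IsChannel Φ) (hunital : Φ 1 = 1) (hscr : CScrambling Φ)
    {ρ : Mat d} (hρ : IsState ρ) (hσ : (Φ ρ).rank < d) : ρ.rank < (Φ ρ).rank := by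
  obtain ⟨p, K, hΦK, hK⟩ := isChannel_iff_krausMap.mp hΦ
  have hKdual : ∑ i, (K i)ᴴᴴ * (K i)ᴴ = 1 := by
    simpa [krausMap_one, hΦK] using hunital
  obtain ⟨P, hP, h1P, hσP, htrP⟩ := (hΦ.isState_apply hρ).1.isHermitian.exists_kernelProjection
  set Q := krausMap (fun i => (K i)ᴴ) P
  have hQ : Q.PosSemidef := posSemidef_krausMap _ hP
  have h1Q : (1 - Q).PosSemidef := by
    have := posSemidef_krausMap (fun i => (K i)ᴴ) h1P
    simpa only [krausMap_sub, krausMap_one, conjTranspose_conjTranspose, hK] using this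
  have hQρ : Q * ρ = 0 := hQ.mul_eq_zero_of_trace_mul_eq_zero hρ.1 <| by
    rw [trace_krausMap_conjTranspose_mul, ← hΦK, trace_mul_comm, hσP, trace_zero]
  have hrank : Q.rank + ρ.rank ≤ d := by
    simpa using rank_add_rank_le_card_of_mul_eq_zero hQρ
  have htrQ : Q.trace = (d - (Φ ρ).rank : ℕ) := by
    rw [trace_krausMap hKdual, htrP, Fintype.card_fin]
  have hρ1 := hρ.one_le_rank
  by_contra! hle
  obtain ⟨φ, ψ, hφ, hψ, hψφ, hQφ, hQψ⟩ := hQ.isHermitian.exists_orthonormal_fixed_and_null h1Q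
    (by rw [htrQ, Complex.natCast_re]; exact_mod_cast (by omega : Q.rank ≤ d - (Φ ρ).rank))
    (fun h => by rw [h, trace_zero, eq_comm, Nat.cast_eq_zero] at htrQ; omega)
    (by rw [Fintype.card_fin]; omega)
  refine (hscr ψ φ hψ hφ hψφ).ne' ?_
  rw [hΦK, hΦK]
  exact trace_krausMap_pureState_mul_eq_zero hK hP h1P hQφ hQψ

theorem min_le_rank_pow_apply (hΦ : IsChannel Φ) (hunital : Φ 1 = 1) (hscr : CScrambling Φ)
    {ρ : Mat d} (hρ : IsState ρ) (k : ℕ) : min (k + 1) d ≤ ((Φ ^ k) ρ).rank := by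
  induction k with
  | zero => simpa using le_trans (min_le_left 1 d) hρ.one_le_rank
  | succ k ih =>
    rw [pow_succ', Module.End.mul_apply]
    have hσ := (hΦ.pow k).isState_apply hρ
    rcases lt_or_ge (Φ ((Φ ^ k) ρ)).rank d with hlt | hge
    · have := hscr.rank_lt_rank_apply hΦ hunital hσ hlt
      omega
    · omega

theorem strictlyPositive_pow (hΦ : IsChannel Φ) (hunital : Φ 1 = 1) (hscr : CScrambling Φ) :
    StrictlyPositive (Φ ^ (d - 1)) := by
  intro ρ hρ
  refine ((hΦ.pow _).isState_apply hρ).1.posDef_of_rank_eq_card ?_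
  have := hscr.min_le_rank_pow_apply hΦ hunital hρ (d - 1)
  have := ((Φ ^ (d - 1)) ρ).rank_le_card_width
  simp only [Fintype.card_fin] at *
  omega

end CScrambling

theorem StrictlyPositive.cScrambling {d : ℕ} {Ψ : Mat d →ₗ[ℂ] Mat d} (hΨ : IsChannel Ψ)
    (hsp : StrictlyPositive Ψ) : CScrambling Ψ := fun _ _ hψ hφ _ =>
  (hsp _ (isState_pureState hψ)).trace_mul_pos (hΨ.isState_apply (isState_pureState hφ)).1
    (hΨ.isState_apply (isState_pureState hφ)).ne_zero

/-- `cTime Φ` and `wTime Φ` unfold to `firstTime` of `CScrambling (Φ ^ ·)` and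
`StrictlyPositive (Φ ^ ·)`. -/
noncomputable def firstTime (P : ℕ → Prop) : ℕ∞ :=
  sInf {N : ℕ∞ | ∃ k : ℕ, N = k ∧ 1 ≤ k ∧ P k}

theorem firstTime_mono {P R : ℕ → Prop} (h : ∀ k, 1 ≤ k → P k → R k) :
    firstTime R ≤ firstTime P :=
  sInf_le_sInf fun _ ⟨k, hN, hk, hP⟩ => ⟨k, hN, hk, h k hk hP⟩

theorem firstTime_le_mul {P R : ℕ → Prop} {c : ℕ} (hc : c ≠ 0)
    (h : ∀ k, 1 ≤ k → P k → R (k * c)) : firstTime R ≤ c * firstTime P := by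
  have hc' : (c : ℕ∞) ≠ 0 := by exact_mod_cast hc
  calc firstTime R ≤ ⨅ N ∈ {N : ℕ∞ | ∃ k : ℕ, N = k ∧ 1 ≤ k ∧ P k}, c * N :=
        le_iInf₂ fun _ ⟨k, hN, hk, hP⟩ => sInf_le ⟨k * c, by rw [hN]; push_cast; ring,
          Nat.one_le_iff_ne_zero.mpr (mul_ne_zero (by omega) hc), h k hk hP⟩
    _ = c * firstTime P := by simp_rw [firstTime, sInf_eq_iInf, ENat.mul_iInf_of_ne hc']

/-- If a unital channel on `M_d(ℂ)` is c-scrambling, then `Φ^(d-1)` is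
strictly positive; consequently a primitive unital channel satisfies
`c(Φ) ≤ w(Φ) ≤ (d-1) c(Φ)`. -/
theorem unital_scrambling_strict_positivity (d : ℕ) (hd : 2 ≤ d)
    (Φ : Module.End ℂ (Mat d)) (hΦ : IsChannel Φ) (hunital : Φ 1 = 1) :
    (CScrambling Φ → StrictlyPositive (Φ ^ (d - 1))) ∧
    (Primitive Φ → cTime Φ ≤ wTime Φ ∧ wTime Φ ≤ ((d - 1 : ℕ) : ℕ∞) * cTime Φ) := by
  refine ⟨CScrambling.strictlyPositive_pow hΦ hunital, fun _ => ⟨?_, ?_⟩⟩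
  · exact firstTime_mono fun k _ hk => hk.cScrambling (hΦ.pow k)
  · refine firstTime_le_mul (by omega) fun k _ hk => ?_
    rw [pow_mul]
    exact hk.strictlyPositive_pow (hΦ.pow k)
      (by rw [Module.End.pow_apply, Function.iterate_fixed hunital])
end
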